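/- arXiv:2512.23503 — 3 statements merged into one kernel-verified Lean document; each statement's English description precedes it below -/
import Mathlib

section
/- Let Φ be a root system of type A_{n-1} realized as Φ⁺ = {ε_i − ε_j : 1 ≤ i < j ≤ n}. Suppose β = β₁ + ⋯ + β_k with β and all β_i positive roots and k > 1. Then there exists an index j such that β − β_j is a positive root. -/
/-- The positive roots of the type `A_{n-1}` root system realized in `ℝⁿ`:
`Φ⁺ = {ε_i − ε_j : i < j}`. -/
def typeAPos (n : ℕ) : Set (Fin n → ℝ) :=
  {v | ∃ i j : Fin n, i < j ∧ v = Pi.single i 1 - Pi.single j 1}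

theorem stmt10 (n k : ℕ) (hk : 1 < k) (β : Fin n → ℝ) (f : Fin k → (Fin n → ℝ))
    (hβ : β ∈ typeAPos n) (hf : ∀ m, f m ∈ typeAPos n)
    (hsum : β = ∑ m, f m) :
    ∃ j, β - f j ∈ typeAPos n := by
  obtain ⟨a, b, hab, hβeq⟩ := hβ
  choose i j hij hfeq using hf
  -- the height functional
  set ht : (Fin n → ℝ) → ℝ := fun v => ∑ t, (t.val : ℝ) * v t with hht
  have hsingle : ∀ c : Fin n, ∑ t : Fin n, (t.val : ℝ) * (Pi.single c (1:ℝ) : Fin n → ℝ) t = (c.val : ℝ) := by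
    intro c
    simp [Pi.single_apply, mul_ite, Finset.sum_ite_eq']
  have htroot : ∀ (c d : Fin n), ht (Pi.single c 1 - Pi.single d 1) = (c.val : ℝ) - d.val := by
    intro c d
    simp only [hht, Pi.sub_apply, mul_sub, Finset.sum_sub_distrib, hsingle]
  -- some summand starts at `a`
  have hfa : ∀ m, f m a = (if i m = a then (1:ℝ) else 0) - (if j m = a then 1 else 0) := by
    intro m
    rw [hfeq m]
    simp [Pi.single_apply, eq_comm]
  have hβa : β a = 1 := by
    have hba : b ≠ a := (ne_of_lt hab).symm
    rw [hβeq]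
    simp [Pi.single_apply, hba]
  have hsuma : (1 : ℝ) = ∑ m, f m a := by
    have := congrFun hsum a
    rw [Finset.sum_apply] at this
    rw [← this, hβa]
  have hexm : ∃ m, i m = a := by
    by_contra hcon
    push_neg at hcon
    have h1 : ∑ m, f m a ≤ 0 := by
      apply Finset.sum_nonpos
      intro m _
      rw [hfa m, if_neg (hcon m)]
      split <;> norm_num
    rw [← hsuma] at h1
    norm_num at h1
  obtain ⟨m, hm⟩ := hexm
  -- height bookkeeping
  have hhtsum : ht β = ∑ m', ht (f m') := by
    rw [hsum]
    simp only [hht, Finset.sum_apply, Finset.mul_sum]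
    exact Finset.sum_comm

  have hhtβ : ht β = (a.val : ℝ) - b.val := by rw [hβeq, htroot]
  have hhtf : ∀ m', ht (f m') = ((i m').val : ℝ) - (j m').val := by
    intro m'
    rw [hfeq m', htroot]
  have hone : ∀ m', ht (f m') ≤ -1 := by
    intro m'
    rw [hhtf m']
    have h1 : (i m' : ℕ) + 1 ≤ (j m' : ℕ) := hij m'
    have h2 := (Nat.cast_le (α := ℝ)).mpr h1
    push_cast at h2
    linarith
  -- conclude j m < b
  have hjb : j m < b := by
    have hsplit : ∑ m', ht (f m') = ht (f m) + ∑ m' ∈ Finset.univ.erase m, ht (f m') :=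
      (Finset.add_sum_erase _ _ (Finset.mem_univ m)).symm
    have hrest : ∑ m' ∈ Finset.univ.erase m, ht (f m') ≤ -((k : ℝ) - 1) := by
      have hcard : (Finset.univ.erase m).card = k - 1 := by
        simp [Finset.card_erase_of_mem]
      calc ∑ m' ∈ Finset.univ.erase m, ht (f m')
          ≤ (Finset.univ.erase m).card • (-1 : ℝ) :=
            Finset.sum_le_card_nsmul _ _ _ (fun x _ => hone x)
        _ = -((k : ℝ) - 1) := by
            rw [hcard, nsmul_eq_mul, Nat.cast_sub hk.le]; push_cast; ring
    have hk2 : (2 : ℝ) ≤ (k : ℝ) := by exact_mod_cast hk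
    have hfm : ht (f m) = (a.val : ℝ) - (j m).val := by rw [hhtf, hm]
    have hlt : ((j m : ℕ) : ℝ) < ((b : ℕ) : ℝ) := by
      rw [hhtβ, hsplit, hfm] at hhtsum
      linarith
    exact_mod_cast hlt
  refine ⟨m, j m, b, hjb, ?_⟩
  rw [hβeq, hfeq m, hm]
  abel
end

section
/- Let ζ ∈ ℂ be a root of unity such that ζ² is a primitive ℓ̄-th root of unity with ℓ̄ > 1. For u, v ∈ ℕ write u = a·ℓ̄ + r and v = b·ℓ̄ + s with 0 ≤ r, s < ℓ̄. Then the balanced quantum binomial coefficient evaluated at ζ satisfies: [u+v choose u]_ζ = 0 if and only if r + s ≥ ℓ̄. -/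
/-- The balanced quantum binomial coefficient `[n choose k]` (the evaluation at `ζ ∈ ℂ`
of the Laurent polynomial `[n]!/([k]![n−k]!) ∈ ℤ[q,q⁻¹]`, where `[m] = (q^m−q^{−m})/(q−q^{−1})`),
defined through the Pascal-type recursion
`[n+1 choose k+1] = ζ^{k+1}[n choose k+1] + ζ^{−(n−k)}[n choose k]` that it satisfies. -/
noncomputable def qBinomC (ζ : ℂ) : ℕ → ℕ → ℂ
  | _, 0 => 1
  | 0, _ + 1 => 0
  | n + 1, k + 1 =>
      ζ ^ (k + 1) * qBinomC ζ n (k + 1) + ζ ^ (-((n : ℤ) - (k : ℤ))) * qBinomC ζ n k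

/-!
Up to the unit `ζ^(k(k-n))`, `[n choose k]_ζ` is the Gaussian binomial coefficient at `t = ζ²`.
The Gaussian binomials satisfy `(t^(k+1) - 1) [n choose k+1]_t = (t^(n-k) - 1) [n choose k]_t`;
when `t` is a primitive `l`-th root of unity this shows that `[n choose k]_t ≠ 0` for
`k ≤ n < l` and that `[l choose k]_t = 0` for `0 < k < l`. The latter gives
`[n+l choose k]_t = [n choose k]_t + [n choose k-l]_t`, hence the q-Lucas theorem
`[ml+c choose jl+d]_t = (m choose j) [c choose d]_t` for `c, d < l`. If `r + s < l` the coefficient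
is therefore `(a+b choose a) [r+s choose r]_t ≠ 0`; otherwise `u + v = (a+b+1)l + (r+s-l)` and it
is `(a+b+1 choose a) [r+s-l choose r]_t = 0`.
-/

def gaussBinom {R : Type*} [CommRing R] (t : R) : ℕ → ℕ → R
  | _, 0 => 1
  | 0, _ + 1 => 0
  | n + 1, k + 1 => t ^ (k + 1) * gaussBinom t n (k + 1) + gaussBinom t n k

section gaussBinom

variable {R : Type*} [CommRing R] (t : R)

@[simp] theorem gaussBinom_zero_right (n : ℕ) : gaussBinom t n 0 = 1 := by
  cases n <;> rfl

@[simp] theorem gaussBinom_zero_succ (k : ℕ) : gaussBinom t 0 (k + 1) = 0 := rfl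

theorem gaussBinom_succ_succ (n k : ℕ) :
    gaussBinom t (n + 1) (k + 1) = t ^ (k + 1) * gaussBinom t n (k + 1) + gaussBinom t n k :=
  rfl

theorem gaussBinom_eq_zero_of_lt {n k : ℕ} (h : n < k) : gaussBinom t n k = 0 := by
  induction n generalizing k with
  | zero => obtain ⟨k, rfl⟩ := Nat.exists_eq_add_of_lt h; rfl
  | succ n ih =>
    obtain ⟨k, rfl⟩ : ∃ j, k = j + 1 := ⟨k - 1, by omega⟩
    rw [gaussBinom_succ_succ, ih (by omega), ih (by omega), mul_zero, add_zero]

@[simp] theorem gaussBinom_self (n : ℕ) : gaussBinom t n n = 1 := by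
  induction n with
  | zero => rfl
  | succ n ih => rw [gaussBinom_succ_succ, ih, gaussBinom_eq_zero_of_lt t n.lt_succ_self, mul_zero,
      zero_add]

theorem gaussBinom_zero_left (k : ℕ) : gaussBinom t 0 k = if k = 0 then 1 else 0 := by
  cases k <;> rfl

/-- `[k+1]_t [n choose k+1]_t = [n-k]_t [n choose k]_t`, multiplied by `t - 1`. -/
theorem pow_succ_sub_one_mul_gaussBinom_succ (n k : ℕ) :
    (t ^ (k + 1) - 1) * gaussBinom t n (k + 1) = (t ^ (n - k) - 1) * gaussBinom t n k := by
  induction n generalizing k with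
  | zero => simp
  | succ n ih =>
    cases k with
    | zero =>
      have h₀ := ih 0
      simp only [zero_add, gaussBinom_zero_right, Nat.sub_zero] at h₀ ⊢
      rw [gaussBinom_succ_succ, gaussBinom_zero_right]
      linear_combination t * h₀
    | succ k =>
      rw [gaussBinom_succ_succ, gaussBinom_succ_succ, Nat.add_sub_add_right]
      rcases lt_or_ge k n with hkn | hnk
      · obtain ⟨m, rfl⟩ := Nat.exists_eq_add_of_lt hkn
        have h₁ := ih (k + 1)
        have h₂ := ih k
        rw [show k + m + 1 - (k + 1) = m by omega] at h₁
        rw [show k + m + 1 - k = m + 1 by omega] at h₂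
        rw [show k + m + 1 - k = m + 1 by omega]
        linear_combination t ^ (k + 2) * h₁ + h₂
      · simp [gaussBinom_eq_zero_of_lt t (show n < k + 1 by omega),
          gaussBinom_eq_zero_of_lt t (show n < k + 1 + 1 by omega), Nat.sub_eq_zero_of_le hnk]

end gaussBinom

namespace IsPrimitiveRoot

variable {R : Type*} [CommRing R] [IsDomain R] {t : R} {l : ℕ}

theorem gaussBinom_ne_zero (h : IsPrimitiveRoot t l) {n k : ℕ} (hkn : k ≤ n) (hnl : n < l) :
    gaussBinom t n k ≠ 0 := by
  induction k with
  | zero => simp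
  | succ k ih =>
    have hratio := pow_succ_sub_one_mul_gaussBinom_succ t n k
    have hrhs : (t ^ (n - k) - 1) * gaussBinom t n k ≠ 0 :=
      mul_ne_zero (sub_ne_zero.mpr (h.pow_ne_one_of_pos_of_lt (by omega) (by omega)))
        (ih (by omega))
    exact right_ne_zero_of_mul (hratio ▸ hrhs)

theorem gaussBinom_eq_zero_of_pos_of_lt (h : IsPrimitiveRoot t l) {k : ℕ} (hk : 0 < k) (hkl : k < l) :
    gaussBinom t l k = 0 := by
  obtain ⟨k, rfl⟩ : ∃ j, k = j + 1 := ⟨k - 1, by omega⟩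
  clear hk
  induction k with
  | zero =>
    have hratio := pow_succ_sub_one_mul_gaussBinom_succ t l 0
    rw [Nat.sub_zero, h.pow_eq_one, sub_self, zero_mul] at hratio
    exact (mul_eq_zero.mp hratio).resolve_left
      (sub_ne_zero.mpr (h.pow_ne_one_of_pos_of_lt one_ne_zero (by omega)))
  | succ k ih =>
    have hratio := pow_succ_sub_one_mul_gaussBinom_succ t l (k + 1)
    rw [ih (by omega), mul_zero] at hratio
    exact (mul_eq_zero.mp hratio).resolve_left
      (sub_ne_zero.mpr (h.pow_ne_one_of_pos_of_lt (by omega) hkl))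

theorem gaussBinom_add (h : IsPrimitiveRoot t l) (hl : 0 < l) (n k : ℕ) :
    gaussBinom t (n + l) k = gaussBinom t n k + if l ≤ k then gaussBinom t n (k - l) else 0 := by
  induction n generalizing k with
  | zero =>
    rw [zero_add, gaussBinom_zero_left, gaussBinom_zero_left]
    rcases lt_trichotomy k l with hkl | rfl | hlk
    · rcases Nat.eq_zero_or_pos k with rfl | hk
      · simp [hl.ne']
      · simp [h.gaussBinom_eq_zero_of_pos_of_lt hk hkl, hk.ne', hkl.not_ge]
    · simp [hl.ne']
    · simp [gaussBinom_eq_zero_of_lt t hlk, hlk.le, (hl.trans hlk).ne', (Nat.sub_pos_of_lt hlk).ne']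
  | succ n ih =>
    cases k with
    | zero => simp [hl.ne']
    | succ k =>
      rw [show n + 1 + l = n + l + 1 by omega, gaussBinom_succ_succ, ih, ih, gaussBinom_succ_succ]
      rcases lt_trichotomy (k + 1) l with hkl | hkl | hlk
      · simp only [hkl.not_ge, show ¬ l ≤ k by omega, if_false]
        ring
      · simp only [hkl, le_refl, if_true, show ¬ l ≤ k by omega, if_false, Nat.sub_self,
          gaussBinom_zero_right, h.pow_eq_one]
        ring
      · have hpow : t ^ (k + 1) = t ^ (k - l + 1) := by
          rw [show k + 1 = (k - l + 1) + l by omega, pow_add, h.pow_eq_one, mul_one]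
        simp only [hlk.le, show l ≤ k by omega, if_true, show k + 1 - l = k - l + 1 by omega,
          gaussBinom_succ_succ, hpow]
        ring

/-- The q-Lucas theorem. -/
theorem gaussBinom_mul_add_mul_add (h : IsPrimitiveRoot t l) {c d : ℕ} (hc : c < l) (hd : d < l)
    (m j : ℕ) :
    gaussBinom t (m * l + c) (j * l + d) = m.choose j * gaussBinom t c d := by
  induction m generalizing j with
  | zero =>
    cases j with
    | zero => simp
    | succ j =>
      rw [gaussBinom_eq_zero_of_lt t (by nlinarith)]
      simp
  | succ m ih =>
    rw [show (m + 1) * l + c = m * l + c + l by ring, h.gaussBinom_add (by omega), ih]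
    cases j with
    | zero => simp [show ¬ l ≤ d by omega]
    | succ j =>
      rw [if_pos (by nlinarith), show (j + 1) * l + d - l = j * l + d by
        rw [add_mul, one_mul]; omega, ih, Nat.choose_succ_succ', Nat.cast_add]
      ring

end IsPrimitiveRoot

theorem pow_mul_qBinomC {ζ : ℂ} (hζ : ζ ≠ 0) (n k : ℕ) :
    ζ ^ (k * n) * qBinomC ζ n k = ζ ^ (k * k) * gaussBinom (ζ ^ 2) n k := by
  induction n generalizing k with
  | zero => cases k <;> simp [qBinomC]
  | succ n ih =>
    cases k with
    | zero => simp [qBinomC]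
    | succ k =>
      have hexp : ζ ^ ((k + 1) * (n + 1)) * ζ ^ (-((n : ℤ) - k)) = ζ ^ (2 * k + 1 + k * n) := by
        rw [← zpow_natCast, ← zpow_natCast, ← zpow_add₀ hζ]
        push_cast
        ring_nf
      rw [qBinomC, gaussBinom_succ_succ]
      linear_combination ζ ^ (2 * (k + 1)) * ih (k + 1) + ζ ^ (2 * k + 1) * ih k
        + qBinomC ζ n k * hexp

theorem qBinomC_eq_zero_iff {ζ : ℂ} (hζ : ζ ≠ 0) (n k : ℕ) :
    qBinomC ζ n k = 0 ↔ gaussBinom (ζ ^ 2) n k = 0 := by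
  have h := pow_mul_qBinomC hζ n k
  constructor <;> intro h0 <;> rw [h0, mul_zero] at h
  · exact (mul_eq_zero.mp h.symm).resolve_left (pow_ne_zero _ hζ)
  · exact (mul_eq_zero.mp h).resolve_left (pow_ne_zero _ hζ)

theorem stmt13_general (ζ : ℂ) (l : ℕ) (hζ : IsPrimitiveRoot (ζ ^ 2) l)
    (u v a b r s : ℕ) (hu : u = a * l + r) (hr : r < l) (hv : v = b * l + s) (hs : s < l) :
    qBinomC ζ (u + v) u = 0 ↔ l ≤ r + s := by
  have hζ0 : ζ ≠ 0 := fun h0 => hζ.ne_zero (by omega) (by rw [h0]; ring)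
  rw [qBinomC_eq_zero_iff hζ0]
  rcases lt_or_ge (r + s) l with hrs | hrs
  · have huv : u + v = (a + b) * l + (r + s) := by subst hu hv; ring
    rw [huv, hu, hζ.gaussBinom_mul_add_mul_add hrs hr]
    simp only [hrs.not_ge, iff_false]
    exact mul_ne_zero (Nat.cast_ne_zero.mpr (Nat.choose_pos (by omega)).ne')
      (hζ.gaussBinom_ne_zero (by omega) hrs)
  · have huv : u + v = (a + b + 1) * l + (r + s - l) := by subst hu hv; zify [hrs]; ring
    rw [huv, hu, hζ.gaussBinom_mul_add_mul_add (by omega) hr,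
      gaussBinom_eq_zero_of_lt _ (by omega), mul_zero]
    simpa using hrs

theorem stmt13 (ζ : ℂ) (l : ℕ) (hl : 1 < l) (hζ : IsPrimitiveRoot (ζ ^ 2) l)
    (u v a b r s : ℕ) (hu : u = a * l + r) (hr : r < l) (hv : v = b * l + s) (hs : s < l) :
    qBinomC ζ (u + v) u = 0 ↔ l ≤ r + s :=
  stmt13_general ζ l hζ u v a b r s hu hr hv hs
end

section
/- Let ζ be a primitive root of unity with ζ² of order ℓ̄ > 1, and let ξ̄ = ζ^{binom(ℓ̄,2)} (a fourth root of unity). Then the quantum factorial satisfies [ℓ̄ − 1]_ζ! = ℓ̄ · ξ̄⁻¹ · (ζ⁻¹ − ζ)^{−ℓ̄+1}; equivalently, (ζ⁻¹ − ζ)^{ℓ̄−1} · [ℓ̄ − 1]_ζ! = ℓ̄ · ξ̄⁻¹ in ℂ. -/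
/-!
Multiplying the `j`-th factor of `[ℓ̄ − 1]_ζ!` by `ζ⁻¹ − ζ` gives `ζ^{-j} (1 − (ζ²)^j)`, so the
left-hand side is `ζ^{-binom(ℓ̄,2)} ∏_{j<ℓ̄} (1 − (ζ²)^j)`; since `ζ²` is a primitive `ℓ̄`-th root
of unity, this last product is the value at `1` of `(X^ℓ̄ − 1)/(X − 1)`, namely `ℓ̄`.
-/

/-- The balanced quantum integer `[m]_ζ = (ζ^m − ζ^{−m})/(ζ − ζ⁻¹)` in `ℂ`. -/
noncomputable def qIntC (ζ : ℂ) (m : ℕ) : ℂ :=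
  (ζ ^ (m : ℤ) - ζ ^ (-(m : ℤ))) / (ζ - ζ⁻¹)

/-- The quantum factorial `[m]_ζ! = Π_{j=1}^m [j]_ζ`. -/
noncomputable def qFactC (ζ : ℂ) (m : ℕ) : ℂ :=
  ∏ j ∈ Finset.range m, qIntC ζ (j + 1)

open Finset

theorem sum_range_succ_eq_choose_two (n : ℕ) : ∑ k ∈ range n, (k + 1) = (n + 1).choose 2 := by
  rw [Nat.choose_two_right, ← sum_range_id, sum_range_succ']
  rfl

theorem inv_sub_mul_qIntC (ζ : ℂ) (m : ℕ) :
    (ζ⁻¹ - ζ) * qIntC ζ m = (ζ ^ m)⁻¹ * (1 - (ζ ^ 2) ^ m) := by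
  rcases eq_or_ne ζ 0 with rfl | hζ
  · cases m <;> simp
  rcases eq_or_ne (ζ ^ 2) 1 with hsq | hsq
  -- at `ζ = ±1` both sides vanish (the left one because `x / 0 = 0`)
  · have : ζ⁻¹ = ζ := by rw [inv_eq_of_mul_eq_one_right (by rw [← sq, hsq])]
    simp [this, hsq]
  have hsub : ζ - ζ⁻¹ ≠ 0 := by
    rw [sub_ne_zero]
    rintro h
    exact hsq (by rw [sq]; nth_rw 2 [h]; exact mul_inv_cancel₀ hζ)
  rw [qIntC, zpow_neg, zpow_natCast, ← neg_sub, neg_mul, mul_div_cancel₀ _ hsub, ← pow_mul,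
    mul_comm 2 m, pow_mul, sq]
  field_simp
  ring

theorem inv_sub_pow_mul_qFactC (ζ : ℂ) (n : ℕ) :
    (ζ⁻¹ - ζ) ^ n * qFactC ζ n =
      (ζ ^ (n + 1).choose 2)⁻¹ * ∏ k ∈ range n, (1 - (ζ ^ 2) ^ (k + 1)) := by
  rw [qFactC, ← card_range n, ← prod_const, card_range, ← prod_mul_distrib]
  simp only [inv_sub_mul_qIntC]
  rw [prod_mul_distrib, prod_inv_distrib, prod_pow_eq_pow_sum, sum_range_succ_eq_choose_two]

/-- With `ξ̄ = ζ^{binom(ℓ̄,2)}`, one has `(ζ⁻¹ − ζ)^{ℓ̄−1} · [ℓ̄−1]_ζ! = ℓ̄ · ξ̄⁻¹`,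
equivalently `[ℓ̄−1]_ζ! = ℓ̄ · ξ̄⁻¹ · (ζ⁻¹ − ζ)^{−ℓ̄+1}`. -/
theorem stmt16 (ζ : ℂ) (l : ℕ) (hl : 1 < l) (hζ : IsPrimitiveRoot (ζ ^ 2) l) :
    (ζ⁻¹ - ζ) ^ (l - 1) * qFactC ζ (l - 1) = (l : ℂ) * (ζ ^ Nat.choose l 2)⁻¹ := by
  obtain ⟨n, rfl⟩ : ∃ n, l = n + 1 := ⟨l - 1, by omega⟩
  rw [Nat.add_sub_cancel, inv_sub_pow_mul_qFactC, hζ.prod_one_sub_pow_eq_order, mul_comm]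
  push_cast
  rfl
end
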